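/- arXiv:2111.07808 — 4 statements merged into one kernel-verified Lean document; each statement's English description precedes it below -/
import Mathlib

section
/- Let γ ∈ SL(2,ℤ) be of finite order with γ ≠ 1. There exists a natural number κ such that: for every d < ord(γ), there exists x ∈ ℝ² \ ⋃_{i=1}^{κ} (1/i)ℤ² with ∑_{i=0}^{d} γ^i x ≡ 0 (mod ℤ²) if and only if d = ord(γ) - 1. -/
open Matrix Finset

lemma aux_det_sub_one_ne (B : Matrix.SpecialLinearGroup (Fin 2) ℤ)
    (hf : IsOfFinOrder B) (hB : B ≠ 1) :
    ((B : Matrix (Fin 2) (Fin 2) ℤ) - 1).det ≠ 0 := by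
  set A : Matrix (Fin 2) (Fin 2) ℤ := (B : Matrix (Fin 2) (Fin 2) ℤ) with hA
  have hdet : A.det = 1 := B.2
  rw [Matrix.det_fin_two] at hdet
  intro h0
  rw [Matrix.det_fin_two] at h0
  simp only [Matrix.sub_apply, Matrix.one_apply] at h0
  norm_num at h0
  have htr : A 0 0 + A 1 1 = 2 := by nlinarith [hdet, h0]
  set N : Matrix (Fin 2) (Fin 2) ℤ := A - 1 with hN
  have hN2 : N * N = 0 := by
    ext i j
    fin_cases i <;> fin_cases j <;>
      simp only [hN, Matrix.mul_apply, Fin.sum_univ_two, Matrix.sub_apply, Matrix.one_apply,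
        Matrix.zero_apply, if_true, if_false, Fin.zero_eta, Fin.mk_one, one_ne_zero,
        zero_ne_one, reduceIte]
    · linear_combination (-1 : ℤ) * hdet + A 0 0 * htr
    · linear_combination A 0 1 * htr
    · linear_combination A 1 0 * htr
    · linear_combination (-1 : ℤ) * hdet + A 1 1 * htr
  have hpow : ∀ m : ℕ, A ^ m = 1 + m • N := by
    intro m
    induction m with
    | zero => simp
    | succ k ih =>
      have hAe : A = 1 + N := by simp [hN]
      rw [pow_succ, ih, hAe, mul_add, mul_one, add_mul, one_mul, smul_mul_assoc, hN2,
        smul_zero, add_zero, succ_nsmul]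
      abel
  have hn : 0 < orderOf B := hf.orderOf_pos
  have hone : A ^ (orderOf B) = 1 := by
    rw [← Matrix.SpecialLinearGroup.coe_pow, pow_orderOf_eq_one]
    rfl
  rw [hpow] at hone
  have hsm : (orderOf B) • N = 0 := by
    have := hone.trans (add_zero (1 : Matrix (Fin 2) (Fin 2) ℤ)).symm
    exact add_left_cancel this
  have hNz : N = 0 := by
    ext i j
    have h := congrFun (congrFun hsm i) j
    simp only [Matrix.smul_apply, Matrix.zero_apply, nsmul_eq_mul] at h
    rcases mul_eq_zero.1 h with h' | h'
    · exact absurd h' (by exact_mod_cast hn.ne')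
    · simpa using h'
  have hA1 : A = 1 := by rwa [hN, sub_eq_zero] at hNz
  exact hB (Subtype.ext hA1)

theorem stmt_3 (γ : Matrix.SpecialLinearGroup (Fin 2) ℤ)
    (hfin : IsOfFinOrder γ) (hne : γ ≠ 1) :
    ∃ κ : ℕ, ∀ d : ℕ, d < orderOf γ →
      ((∃ x : Fin 2 → ℝ,
          (∀ i : ℕ, 1 ≤ i → i ≤ κ →
            ¬ ∃ v : Fin 2 → ℤ, x = fun j => (v j : ℝ) / (i : ℝ)) ∧
          ∃ w : Fin 2 → ℤ,
            ((∑ i ∈ Finset.range (d + 1),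
                (γ : Matrix (Fin 2) (Fin 2) ℤ) ^ i).map
              (Int.cast : ℤ → ℝ)) *ᵥ x = fun j => (w j : ℝ))
        ↔ d = orderOf γ - 1) := by
  set n := orderOf γ with hn_def
  have hn : 0 < n := hfin.orderOf_pos
  set A : Matrix (Fin 2) (Fin 2) ℤ := (γ : Matrix (Fin 2) (Fin 2) ℤ) with hA
  set S : ℕ → Matrix (Fin 2) (Fin 2) ℤ := fun m => ∑ i ∈ Finset.range m, A ^ i with hS
  -- coercion of powers
  have hcoe : ∀ m : ℕ, ((γ ^ m : Matrix.SpecialLinearGroup (Fin 2) ℤ) :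
      Matrix (Fin 2) (Fin 2) ℤ) = A ^ m := fun m => Matrix.SpecialLinearGroup.coe_pow γ m
  -- det of partial sums is nonzero for 0 < m < n
  have key1 : ∀ m : ℕ, 0 < m → m < n → (S m).det ≠ 0 := by
    intro m hm0 hmn
    have hγm : γ ^ m ≠ 1 := by
      intro h
      have : n ∣ m := orderOf_dvd_iff_pow_eq_one.mpr h
      exact absurd (Nat.le_of_dvd hm0 this) (not_le.mpr hmn)
    have hAm : (A ^ m - 1).det ≠ 0 := by
      have := aux_det_sub_one_ne (γ ^ m) (hfin.pow) hγm
      rwa [hcoe m] at this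
    have hg : S m * (A - 1) = A ^ m - 1 := geom_sum_mul A m
    have hdet : (S m).det * (A - 1).det = (A ^ m - 1).det := by
      rw [← Matrix.det_mul, hg]
    intro h0
    rw [h0, zero_mul] at hdet
    exact hAm hdet.symm
  -- S n = 0
  have key2 : S n = 0 := by
    have hg : S n * (A - 1) = 0 := by
      rw [geom_sum_mul]
      have : A ^ n = 1 := by rw [← hcoe n, hn_def, pow_orderOf_eq_one]; rfl
      rw [this, sub_self]
    have h2 : (A - 1).det • S n = 0 := by
      have := congrArg (fun M => M * (A - 1).adjugate) hg
      simp only [zero_mul, Matrix.mul_assoc, Matrix.mul_adjugate] at this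
      rwa [Matrix.mul_smul, mul_one] at this
    have hdne := aux_det_sub_one_ne γ hfin hne
    ext i j
    have h := congrFun (congrFun h2 i) j
    simp only [Matrix.smul_apply, Matrix.zero_apply, smul_eq_mul] at h
    rcases mul_eq_zero.1 h with h' | h'
    · exact absurd h' hdne
    · simpa using h'
  refine ⟨(Finset.range n).sup fun d => ((S (d + 1)).det).natAbs, ?_⟩
  intro d hd
  constructor
  · rintro ⟨x, hx1, w, hw⟩
    by_contra hdn
    have hd1 : d + 1 < n := by omega
    set M := S (d + 1) with hM
    set D := M.det with hD_def
    have hD : D ≠ 0 := key1 (d + 1) (Nat.succ_pos d) hd1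
    set i : ℕ := D.natAbs with hi_def
    have hi1 : 1 ≤ i := by
      rcases Int.natAbs_pos.mpr hD with h; omega
    have hi2 : i ≤ (Finset.range n).sup fun d => ((S (d + 1)).det).natAbs :=
      Finset.le_sup (f := fun d => ((S (d + 1)).det).natAbs) (Finset.mem_range.mpr hd)
    set u : Fin 2 → ℤ := M.adjugate *ᵥ w with hu
    -- (D : ℝ) • x = cast of u
    have hmap : ∀ (P : Matrix (Fin 2) (Fin 2) ℤ), P.map (Int.cast : ℤ → ℝ) =
        P.map (Int.castRingHom ℝ) := fun P => rfl
    have hxu : (D : ℝ) • x = fun j => ((u j : ℤ) : ℝ) := by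
      have h1 := congrArg (fun y => (M.adjugate.map (Int.cast : ℤ → ℝ)) *ᵥ y) hw
      rw [Matrix.mulVec_mulVec] at h1
      rw [hmap, hmap, ← Matrix.map_mul, Matrix.adjugate_mul] at h1
      have hL : ((D • (1 : Matrix (Fin 2) (Fin 2) ℤ)).map (Int.castRingHom ℝ)) =
          (D : ℝ) • (1 : Matrix (Fin 2) (Fin 2) ℝ) := by
        ext a b
        simp only [Matrix.map_apply, Matrix.smul_apply, Matrix.one_apply, smul_eq_mul]
        split_ifs <;> simp
      rw [hL, Matrix.smul_mulVec, Matrix.one_mulVec] at h1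
      rw [h1]
      funext j
      simp only [hu, Matrix.mulVec, dotProduct, Fin.sum_univ_two, Matrix.map_apply]
      push_cast
      rfl
    have hxj : ∀ j, x j = (u j : ℝ) / (D : ℝ) := by
      intro j
      have := congrFun hxu j
      simp only [Pi.smul_apply, smul_eq_mul] at this
      field_simp
      linarith [this]
    rcases hD.lt_or_gt with hneg | hpos
    · refine hx1 i hi1 hi2 ⟨-u, ?_⟩
      funext j
      rw [hxj j]
      have hcast : ((i : ℕ) : ℝ) = -(D : ℝ) := by
        rw [hi_def, Nat.cast_natAbs]
        exact_mod_cast abs_of_neg hneg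
      rw [hcast]
      simp only [Pi.neg_apply, Int.cast_neg, neg_div_neg_eq]
    · refine hx1 i hi1 hi2 ⟨u, ?_⟩
      funext j
      rw [hxj j]
      have hcast : ((i : ℕ) : ℝ) = (D : ℝ) := by
        rw [hi_def, Nat.cast_natAbs]
        exact_mod_cast abs_of_pos hpos
      rw [hcast]
  · intro hdeq
    have hdn : d + 1 = n := by omega
    refine ⟨fun _ => Real.sqrt 2, ?_, 0, ?_⟩
    · rintro i hi1 hi2 ⟨v, hv⟩
      have h0 := congrFun hv 0
      exact irrational_sqrt_two ⟨(v 0 : ℚ) / (i : ℚ), by push_cast; exact h0.symm⟩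
    · rw [hdn]
      have h0 : (∑ i ∈ Finset.range n, A ^ i) = 0 := key2
      rw [h0]
      funext j
      simp [Matrix.mulVec]
end

section
/- Let E = ℝ²/ℤ² and let γ ∈ SL(2,ℤ) be of finite order d, γ ≠ 1, and κ = max_{0<n<d} |det(1 − γ^n)|. Then for every point x ∈ E that is not torsion of order ≤ κ and every 0 ≤ m < d − 1, the sum ∑_{i=0}^{m} γ^i x is nonzero in E, while ∑_{i=0}^{d−1} γ^i x = 0 for all x. -/
open Matrix Finset

lemma aux_pow (N : Matrix (Fin 2) (Fin 2) ℤ) (hN : N * N = 0) (k : ℕ) :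
    (1 + N) ^ k = 1 + (k : ℤ) • N := by
  induction k with
  | zero => simp
  | succ k ih =>
    rw [pow_succ, ih, add_mul, mul_add, mul_add, one_mul, mul_one, smul_mul_assoc, hN]
    push_cast
    rw [add_smul, one_smul]
    simp only [smul_zero, one_mul]
    abel

lemma aux_key (β : Matrix.SpecialLinearGroup (Fin 2) ℤ) (hfin : IsOfFinOrder β) (hne : β ≠ 1) :
    ((1 : Matrix (Fin 2) (Fin 2) ℤ) - (β : Matrix (Fin 2) (Fin 2) ℤ)).det ≠ 0 := by
  intro h0
  set A := (β : Matrix (Fin 2) (Fin 2) ℤ) with hA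
  have hdetA : A.det = 1 := β.2
  rw [Matrix.det_fin_two] at h0 hdetA
  simp only [Matrix.sub_apply, Matrix.one_apply] at h0
  norm_num at h0
  have htr : A 0 0 + A 1 1 = 2 := by linear_combination hdetA - h0
  set N : Matrix (Fin 2) (Fin 2) ℤ := A - 1 with hNdef
  have hNsq : N * N = 0 := by
    ext i j
    fin_cases i <;> fin_cases j <;>
      simp [hNdef, Matrix.mul_apply, Fin.sum_univ_two, Matrix.sub_apply, Matrix.one_apply]
    · linear_combination (A 0 0 - 1) * htr - h0
    · linear_combination (A 0 1) * htr
    · linear_combination (A 1 0) * htr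
    · linear_combination (A 1 1 - 1) * htr - h0
  obtain ⟨n, hn, hβn⟩ := isOfFinOrder_iff_pow_eq_one.mp hfin
  have hAn : A ^ n = 1 := by
    rw [hA, ← Matrix.SpecialLinearGroup.coe_pow, hβn]; rfl
  have hA1 : A = 1 + N := by rw [hNdef]; abel
  rw [hA1, aux_pow N hNsq, add_eq_left] at hAn
  have hN0 : N = 0 := by
    have hnz : (n : ℤ) ≠ 0 := by exact_mod_cast hn.ne'
    exact (smul_eq_zero.mp hAn).resolve_left hnz
  apply hne
  have : A = 1 := by rw [hA1, hN0, add_zero]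
  exact Subtype.coe_injective this

lemma aux_mulVec_cast (M : Matrix (Fin 2) (Fin 2) ℤ) (w : Fin 2 → ℤ) :
    (M.map (Int.cast : ℤ → ℝ)) *ᵥ (fun j => (w j : ℝ)) = fun j => ((M *ᵥ w) j : ℝ) := by
  funext j
  simp [Matrix.mulVec, dotProduct, Fin.sum_univ_two, Matrix.map_apply]

lemma aux_map_mul (M N : Matrix (Fin 2) (Fin 2) ℤ) :
    ((M * N).map (Int.cast : ℤ → ℝ)) = M.map (Int.cast : ℤ → ℝ) * N.map (Int.cast : ℤ → ℝ) := by
  ext i j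
  simp [Matrix.mul_apply, Fin.sum_univ_two, Matrix.map_apply]

lemma aux_cancel (S M : Matrix (Fin 2) (Fin 2) ℤ) (hM : M.det ≠ 0) (h : S * M = 0) :
    S = 0 := by
  have h2 : S * M * M.adjugate = 0 := by rw [h, zero_mul]
  rw [mul_assoc, Matrix.mul_adjugate, mul_smul_comm, mul_one] at h2
  exact (smul_eq_zero.mp h2).resolve_left hM

theorem stmt_13 (γ : Matrix.SpecialLinearGroup (Fin 2) ℤ)
    (hfin : IsOfFinOrder γ) (hne : γ ≠ 1) (d κ : ℕ) (hd : d = orderOf γ)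
    (hκ : κ = (Finset.Ioo 0 d).sup fun n =>
      (((1 : Matrix (Fin 2) (Fin 2) ℤ) -
        (γ : Matrix (Fin 2) (Fin 2) ℤ) ^ n).det).natAbs) :
    (∀ x : Fin 2 → ℝ,
      (∀ k : ℕ, 1 ≤ k → k ≤ κ →
        ¬ ∃ v : Fin 2 → ℤ, (fun j => (k : ℝ) * x j) = fun j => (v j : ℝ)) →
      ∀ m : ℕ, m < d - 1 →
        ¬ ∃ w : Fin 2 → ℤ,
          ((∑ i ∈ Finset.range (m + 1),
              (γ : Matrix (Fin 2) (Fin 2) ℤ) ^ i).map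
            (Int.cast : ℤ → ℝ)) *ᵥ x = fun j => (w j : ℝ)) ∧
    (∀ x : Fin 2 → ℝ, ∃ w : Fin 2 → ℤ,
      ((∑ i ∈ Finset.range d, (γ : Matrix (Fin 2) (Fin 2) ℤ) ^ i).map
        (Int.cast : ℤ → ℝ)) *ᵥ x = fun j => (w j : ℝ)) := by
  set A := (γ : Matrix (Fin 2) (Fin 2) ℤ) with hAdef
  have hd2 : 2 ≤ d := by
    rw [hd]
    rcases Nat.lt_or_ge (orderOf γ) 2 with h | h
    · interval_cases h' : orderOf γ
      · exact absurd (orderOf_eq_zero_iff.mp h') (by simpa using hfin)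
      · exact absurd (orderOf_eq_one_iff.mp h') hne
    · exact h
  constructor
  · intro x hx m hm
    rintro ⟨w, hw⟩
    set S : Matrix (Fin 2) (Fin 2) ℤ := ∑ i ∈ Finset.range (m + 1), A ^ i with hSdef
    set B : Matrix (Fin 2) (Fin 2) ℤ := 1 - A ^ (m + 1) with hBdef
    have hgeom : (1 - A) * S = B := mul_neg_geom_sum A (m + 1)
    have hm1d : m + 1 < d := by omega
    have hpow_ne : γ ^ (m + 1) ≠ 1 := by
      intro h
      have := orderOf_dvd_of_pow_eq_one h
      have := Nat.le_of_dvd (Nat.succ_pos m) this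
      omega
    have hdetB : B.det ≠ 0 := by
      have := aux_key (γ ^ (m + 1)) (hfin.pow) hpow_ne
      rwa [Matrix.SpecialLinearGroup.coe_pow] at this
    set k : ℕ := B.det.natAbs with hkdef
    have hk1 : 1 ≤ k := Int.natAbs_pos.mpr hdetB
    have hkκ : k ≤ κ := by
      rw [hκ]
      exact Finset.le_sup (f := fun n =>
        (((1 : Matrix (Fin 2) (Fin 2) ℤ) - A ^ n).det).natAbs)
        (Finset.mem_Ioo.mpr ⟨Nat.succ_pos m, hm1d⟩)
    -- B *ᵥ x over ℝ is an integer vector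
    have h1 : (B.map (Int.cast : ℤ → ℝ)) *ᵥ x
        = fun j => ((((1 : Matrix (Fin 2) (Fin 2) ℤ) - A) *ᵥ w) j : ℝ) := by
      rw [← hgeom, aux_map_mul, ← Matrix.mulVec_mulVec, hw, aux_mulVec_cast]
    set v0 : Fin 2 → ℤ := B.adjugate *ᵥ (((1 : Matrix (Fin 2) (Fin 2) ℤ) - A) *ᵥ w) with hv0
    have h2 : (fun j => (B.det : ℝ) * x j) = fun j => (v0 j : ℝ) := by
      have h3 : (B.adjugate.map (Int.cast : ℤ → ℝ)) *ᵥ ((B.map (Int.cast : ℤ → ℝ)) *ᵥ x)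
          = fun j => (v0 j : ℝ) := by
        rw [h1, aux_mulVec_cast]
      rw [Matrix.mulVec_mulVec, ← aux_map_mul, Matrix.adjugate_mul] at h3
      rw [← h3]
      funext j
      fin_cases j <;>
        simp only [Matrix.mulVec, dotProduct, Fin.sum_univ_two, Matrix.map_apply,
          Matrix.smul_apply, Matrix.one_apply, smul_eq_mul, Fin.isValue] <;>
        norm_num
    rcases Int.natAbs_eq B.det with he | he <;> rw [← hkdef] at he
    · refine hx k hk1 hkκ ⟨v0, ?_⟩
      have hk' : ((k : ℕ) : ℝ) = ((B.det : ℤ) : ℝ) := by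
        exact_mod_cast (congrArg (fun z : ℤ => (z : ℝ)) he).symm
      funext j
      rw [hk']
      exact congrFun h2 j
    · refine hx k hk1 hkκ ⟨-v0, ?_⟩
      have hk' : ((k : ℕ) : ℝ) = -((B.det : ℤ) : ℝ) := by
        have : ((B.det : ℤ) : ℝ) = -((k : ℕ) : ℝ) := by exact_mod_cast congrArg (fun z : ℤ => (z : ℝ)) he
        linarith
      funext j
      have h4 := congrFun h2 j
      rw [Pi.neg_apply, Int.cast_neg, hk']
      linarith
  · intro x
    have hS0 : (∑ i ∈ Finset.range d, A ^ i) = 0 := by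
      apply aux_cancel _ (A - 1)
      · have h1 : ((1 : Matrix (Fin 2) (Fin 2) ℤ) - A).det ≠ 0 := aux_key γ hfin hne
        intro h
        apply h1
        have : A - 1 = -(1 - A) := by abel
        rw [this, Matrix.det_neg] at h
        simpa using h
      · rw [geom_sum_mul]
        have : A ^ d = 1 := by
          rw [hAdef, ← Matrix.SpecialLinearGroup.coe_pow, hd, pow_orderOf_eq_one]; rfl
        rw [this, sub_self]
    refine ⟨0, ?_⟩
    rw [hS0]
    funext j
    simp [Matrix.mulVec, dotProduct]
end

section
/- Let Γ ≤ SL(2,ℤ) be a subgroup containing [[1, 2N],[0,1]] for some N ≥ 1 and, for some prime p, an element congruent to [[0,1],[−1,0]] modulo p. If a point (a,b) ∈ ℝ²/ℤ² has finite Γᵀ-orbit (under the transposed action), then (a,b) ∈ ℚ²/ℤ², i.e. the point is torsion. -/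
/-!
Right multiplication by `uᵏ`, `u = [[1, M], [0, 1]]`, shears the transposed action: the second
coordinate of the image of `(a, b)` under `γ uᵏ` is that under `γ` plus `kM` times the first one.
A finite orbit therefore contains a finite orbit of the rotation of `ℝ/ℤ` by `M(γ₀₀ a + γ₁₀ b)`,
so `γ₀₀ a + γ₁₀ b` is rational for every `γ ∈ Γ`. For `γ = 1` this is `a`; for the element that
is `[[0, 1], [-1, 0]]` mod `p` the coefficient `γ₁₀ ≡ -1` is nonzero, which gives `b`.
-/

open Matrix

/-- The upper triangular unipotent matrix `[[1, M],[0, 1]]` in `SL(2,ℤ)`. -/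
def unip (M : ℤ) : Matrix.SpecialLinearGroup (Fin 2) ℤ :=
  ⟨!![1, M; 0, 1], by simp [Matrix.det_fin_two_of]⟩

theorem not_irrational_of_finite_range_add_mul {y d : ℝ}
    (h : (Set.range fun k : ℕ => ((y + k * d : ℝ) : AddCircle (1 : ℝ))).Finite) :
    ¬ Irrational d := by
  have hrange : (Set.range fun k : ℕ => k • (d : AddCircle (1 : ℝ))).Finite := by
    convert h.image (· - (y : AddCircle (1 : ℝ))) using 1
    rw [← Set.range_comp]
    congr 1
    ext k
    simp only [Function.comp_apply, ← AddCircle.coe_sub, ← AddCircle.coe_nsmul, nsmul_eq_mul,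
      add_sub_cancel_left]
  have hfin : IsOfFinAddOrder (d : AddCircle (1 : ℝ)) := by
    by_contra hinf
    exact Set.infinite_range_of_injective (injective_nsmul_iff_not_isOfFinAddOrder.2 hinf) hrange
  obtain ⟨q, hq⟩ := AddCircle.isOfFinAddOrder_iff_exists_rat_eq_div.1 hfin
  exact fun hd => hd.ne_rat q (by simpa using hq.symm)

theorem coe_unip (M : ℤ) : (unip M : Matrix (Fin 2) (Fin 2) ℤ) = !![1, M; 0, 1] := rfl

theorem unip_add (M M' : ℤ) : unip (M + M') = unip M * unip M' := by
  ext : 1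
  simp [coe_unip, add_comm]

theorem unip_pow (M : ℤ) (k : ℕ) : unip M ^ k = unip (k * M) := by
  induction k with
  | zero => ext : 1; simp [coe_unip, Matrix.one_fin_two]
  | succ k ih =>
    rw [pow_succ, ih, ← unip_add]
    congr 1
    push_cast
    ring

theorem mul_unip_apply_zero_one (γ : Matrix.SpecialLinearGroup (Fin 2) ℤ) (M : ℤ) :
    (γ * unip M) 0 1 = γ 0 1 + M * γ 0 0 := by
  simp [coe_unip, Matrix.mul_apply, Fin.sum_univ_two]; ring

theorem mul_unip_apply_one_one (γ : Matrix.SpecialLinearGroup (Fin 2) ℤ) (M : ℤ) :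
    (γ * unip M) 1 1 = γ 1 1 + M * γ 1 0 := by
  simp [coe_unip, Matrix.mul_apply, Fin.sum_univ_two]; ring

theorem not_irrational_of_finite_image_snd {Γ : Subgroup (Matrix.SpecialLinearGroup (Fin 2) ℤ)}
    {M : ℤ} (hM : M ≠ 0) (hunip : unip M ∈ Γ) {a b : ℝ}
    (hfin : ((fun γ : Matrix.SpecialLinearGroup (Fin 2) ℤ =>
      (((γ 0 1 : ℝ) * a + (γ 1 1 : ℝ) * b : ℝ) : AddCircle (1 : ℝ))) '' Γ).Finite)
    {γ : Matrix.SpecialLinearGroup (Fin 2) ℤ} (hγ : γ ∈ Γ) :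
    ¬ Irrational ((γ 0 0 : ℝ) * a + (γ 1 0 : ℝ) * b) := by
  intro hirr
  refine not_irrational_of_finite_range_add_mul
    (y := (γ 0 1 : ℝ) * a + (γ 1 1 : ℝ) * b) (hfin.subset ?_) (hirr.intCast_mul hM)
  rintro _ ⟨k, rfl⟩
  refine ⟨γ * unip M ^ k, Γ.mul_mem hγ (Γ.pow_mem hunip k), ?_⟩
  simp only [unip_pow, mul_unip_apply_zero_one, mul_unip_apply_one_one]
  push_cast
  ring_nf

theorem stmt_18 (Γ : Subgroup (Matrix.SpecialLinearGroup (Fin 2) ℤ))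
    (N : ℕ) (hN : 1 ≤ N) (hunip : unip (2 * N) ∈ Γ)
    (p : ℕ) (hp : p.Prime)
    (hmod : ∃ γ ∈ Γ,
      ((γ : Matrix (Fin 2) (Fin 2) ℤ) 0 0) ≡ 0 [ZMOD p] ∧
      ((γ : Matrix (Fin 2) (Fin 2) ℤ) 0 1) ≡ 1 [ZMOD p] ∧
      ((γ : Matrix (Fin 2) (Fin 2) ℤ) 1 0) ≡ -1 [ZMOD p] ∧
      ((γ : Matrix (Fin 2) (Fin 2) ℤ) 1 1) ≡ 0 [ZMOD p])
    (a b : ℝ)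
    (hfin : (Set.image
      (fun γ : Matrix.SpecialLinearGroup (Fin 2) ℤ =>
        (((((γ : Matrix (Fin 2) (Fin 2) ℤ) 0 0 : ℝ) * a +
            ((γ : Matrix (Fin 2) (Fin 2) ℤ) 1 0 : ℝ) * b : ℝ) :
              AddCircle (1 : ℝ)),
         ((((γ : Matrix (Fin 2) (Fin 2) ℤ) 0 1 : ℝ) * a +
            ((γ : Matrix (Fin 2) (Fin 2) ℤ) 1 1 : ℝ) * b : ℝ) :
              AddCircle (1 : ℝ))))
      (Γ : Set (Matrix.SpecialLinearGroup (Fin 2) ℤ))).Finite) :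
    (∃ q : ℚ, a = (q : ℝ)) ∧ (∃ q : ℚ, b = (q : ℝ)) := by
  have hsnd := hfin.image Prod.snd
  rw [Set.image_image] at hsnd
  have hM : (2 * N : ℤ) ≠ 0 := by omega
  have key := fun γ (hγ : γ ∈ Γ) => not_irrational_of_finite_image_snd hM hunip hsnd hγ
  obtain ⟨qa, rfl⟩ := exists_rat_of_not_irrational (by simpa using key 1 Γ.one_mem)
  refine ⟨⟨qa, rfl⟩, exists_rat_of_not_irrational fun hb => ?_⟩
  obtain ⟨γ, hγ, -, -, hc, -⟩ := hmod
  have hc0 : γ 1 0 ≠ 0 := by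
    rintro h0
    rw [h0] at hc
    exact hp.not_dvd_one (Int.natCast_dvd_natCast.1 (by simpa using hc.dvd))
  have hirr := (hb.intCast_mul hc0).ratCast_add (γ 0 0 * qa)
  push_cast at hirr
  exact key γ hγ hirr
end

section
/- Let f : Δ → ℂ and τ : Δ → ℍ be holomorphic on a connected open set Δ ⊆ ℂ, and write f(t) = a(t)τ(t) + b(t) with a, b : Δ → ℝ continuous. Suppose that for every t ∈ Δ and every pair of rationals (q₁, q₂) with denominators in a fixed infinite multiplicatively closed set I ⊆ ℕ, we have (a(t), b(t)) ≠ (q₁, q₂). Then a and b are both constant. -/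
/-!
Fix `s ∈ Δ` and put `g = f - (a s τ + b s)`, holomorphic on `Δ` with `g s = 0`. If `g` vanishes
near `s`, the identity theorem gives `g ≡ 0` on `Δ`, and since `Im τ > 0` the coordinates of
`f t = a t τ t + b t` are unique, so `(a t, b t) = (a s, b s)`. Otherwise the zero of `g` at `s`
is isolated, and a minimum-modulus (Hurwitz-type) argument shows that the zero persists under
small perturbations `g - ((c - a s) τ + (d - b s))`: every `(c, d)` near `(a s, b s)` equals
`(a z, b z)` for some `z ∈ Δ`. As `I` is infinite, some `(p / n, q / n)` with `n ∈ I` is that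
close, contradicting the hypothesis.
-/

open Metric Filter Topology

theorem Complex.ofReal_mul_add_ofReal_inj {w : ℂ} (hw : w.im ≠ 0) {a b c d : ℝ} :
    (a : ℂ) * w + b = c * w + d ↔ a = c ∧ b = d := by
  refine ⟨fun h ↦ ?_, fun ⟨hac, hbd⟩ ↦ by rw [hac, hbd]⟩
  have hac : a = c := mul_right_cancel₀ hw (by simpa using congrArg Complex.im h)
  subst hac
  exact ⟨rfl, by exact_mod_cast add_left_cancel h⟩

theorem abs_round_mul_div_sub_le (x : ℝ) {n : ℕ} (hn : 0 < n) :
    |round (n * x) / n - x| ≤ 1 / (2 * n) := by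
  have hn' : (0 : ℝ) < n := by exact_mod_cast hn
  have h : round (n * x) / n - x = -((n * x - round (n * x)) / n) := by field_simp; ring
  rw [h, abs_neg, abs_div, abs_of_pos hn', div_le_div_iff₀ hn' (by positivity)]
  nlinarith [abs_sub_round (n * x : ℝ)]

theorem Set.Infinite.exists_int_div_near {I : Set ℕ} (hI : I.Infinite) (x y : ℝ) {δ : ℝ}
    (hδ : 0 < δ) : ∃ n ∈ I, ∃ p q : ℤ, |p / n - x| < δ ∧ |q / n - y| < δ := by
  obtain ⟨n, hnI, hn⟩ := hI.exists_gt ⌈δ⁻¹⌉₊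
  have hn0 : 0 < n := by omega
  have hn' : δ⁻¹ < n := (Nat.le_ceil _).trans_lt (by exact_mod_cast hn)
  have hclose : 1 / (2 * (n : ℝ)) < δ := by
    rw [div_lt_iff₀ (by positivity)]
    nlinarith [inv_mul_cancel₀ hδ.ne']
  exact ⟨n, hnI, round (n * x), round (n * y),
    (abs_round_mul_div_sub_le x hn0).trans_lt hclose,
    (abs_round_mul_div_sub_le y hn0).trans_lt hclose⟩

theorem Complex.exists_eq_zero_of_norm_lt_of_forall_mem_frontier
    {E : Type*} [NormedAddCommGroup E] [NormedSpace ℂ E] [Nontrivial E] {h : E → ℂ} {U : Set E}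
    (hU : Bornology.IsBounded U) (hh : DiffContOnCl ℂ h U) {w : E} (hw : w ∈ closure U) {C : ℝ}
    (hwC : ‖h w‖ < C) (hC : ∀ z ∈ frontier U, C ≤ ‖h z‖) : ∃ z ∈ closure U, h z = 0 := by
  by_contra! hne
  have hC0 : 0 < C := (norm_nonneg _).trans_lt hwC
  have hinv : DiffContOnCl ℂ (fun z ↦ (h z)⁻¹) U :=
    ⟨hh.differentiableOn.inv fun z hz ↦ hne z (subset_closure hz),
      hh.continuousOn.inv₀ hne⟩
  have hle : ‖(h w)⁻¹‖ ≤ C⁻¹ :=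
    Complex.norm_le_of_forall_mem_frontier_norm_le hU hinv
      (fun z hz ↦ by rw [norm_inv]; exact inv_anti₀ hC0 (hC z hz)) hw
  rw [norm_inv, inv_le_inv₀ (norm_pos_iff.2 (hne w hw)) hC0] at hle
  exact hle.not_gt hwC

theorem Complex.exists_closedBall_forall_exists_zero_of_norm_sub_lt {g : ℂ → ℂ} {U : Set ℂ}
    {s : ℂ} (hU : U ∈ 𝓝 s) (hg : DifferentiableOn ℂ g U) (hs : g s = 0)
    (hiso : ∀ᶠ z in 𝓝[≠] s, g z ≠ 0) :
    ∃ r > 0, closedBall s r ⊆ U ∧ ∃ ε > 0, ∀ h : ℂ → ℂ, DifferentiableOn ℂ h U →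
      (∀ z ∈ closedBall s r, ‖h z - g z‖ < ε) → ∃ z ∈ closedBall s r, h z = 0 := by
  obtain ⟨r₁, hr₁, hU₁⟩ := Metric.nhds_basis_closedBall.mem_iff.1 hU
  obtain ⟨r₂, hr₂, hne⟩ := Metric.eventually_nhds_iff.1 (eventually_nhdsWithin_iff.1 hiso)
  set r := min r₁ (r₂ / 2)
  have hr : 0 < r := lt_min hr₁ (half_pos hr₂)
  have hK : closedBall s r ⊆ U := (closedBall_subset_closedBall (min_le_left _ _)).trans hU₁
  have hsphere : ∀ z ∈ sphere s r, g z ≠ 0 := fun z hz ↦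
    hne (by rw [mem_sphere.1 hz]; linarith [min_le_right r₁ (r₂ / 2)])
      (ne_of_mem_sphere hz hr.ne')
  obtain ⟨z₀, hz₀, hmin⟩ := (isCompact_sphere s r).exists_isMinOn
    (NormedSpace.sphere_nonempty.2 hr.le)
    (hg.continuousOn.mono (sphere_subset_closedBall.trans hK)).norm
  -- half the minimum of `‖g‖` on the boundary circle
  refine ⟨r, hr, hK, ‖g z₀‖ / 2, half_pos (norm_pos_iff.2 (hsphere z₀ hz₀)), fun h hh hhg ↦ ?_⟩
  rw [← closure_ball s hr.ne']
  refine Complex.exists_eq_zero_of_norm_lt_of_forall_mem_frontier isBounded_ball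
    (hh.mono (by rwa [closure_ball s hr.ne'])).diffContOnCl (subset_closure (mem_ball_self hr))
    (C := ‖g z₀‖ / 2) ?_ fun z hz ↦ ?_
  · simpa [hs] using hhg s (mem_closedBall_self hr.le)
  · rw [frontier_ball s hr.ne'] at hz
    have hgz : ‖g z₀‖ ≤ ‖g z‖ := hmin hz
    have := norm_sub_norm_le (g z) (h z)
    rw [norm_sub_rev] at this
    linarith [hhg z (sphere_subset_closedBall hz)]

theorem Complex.exists_pos_forall_exists_eq_ofReal_mul_add_ofReal {f τ : ℂ → ℂ} {U : Set ℂ}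
    {s : ℂ} (hU : U ∈ 𝓝 s) (hf : DifferentiableOn ℂ f U) (hτ : DifferentiableOn ℂ τ U)
    {a₀ b₀ : ℝ} (hs : f s = a₀ * τ s + b₀) (hiso : ∀ᶠ z in 𝓝[≠] s, f z ≠ a₀ * τ z + b₀) :
    ∃ δ > 0, ∀ c d : ℝ, |c - a₀| < δ → |d - b₀| < δ → ∃ z ∈ U, f z = c * τ z + d := by
  have hdiff (c d : ℝ) : DifferentiableOn ℂ (fun z ↦ f z - (c * τ z + d)) U :=
    hf.sub ((hτ.const_mul _).add_const _)
  obtain ⟨r, hr, hK, ε, hε, hzero⟩ :=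
    exists_closedBall_forall_exists_zero_of_norm_sub_lt hU (hdiff a₀ b₀) (sub_eq_zero.2 hs)
      (hiso.mono fun _ ↦ sub_ne_zero.2)
  obtain ⟨M, hM⟩ := (isCompact_closedBall s r).exists_bound_of_continuousOn
    (hτ.continuousOn.mono hK)
  have hM0 : 0 ≤ M := (norm_nonneg _).trans (hM s (mem_closedBall_self hr.le))
  refine ⟨ε / (M + 1), by positivity, fun c d hc hd ↦ ?_⟩
  suffices hclose : ∀ z ∈ closedBall s r, ‖f z - (c * τ z + d) - (f z - (a₀ * τ z + b₀))‖ < ε by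
    obtain ⟨z, hz, hz0⟩ := hzero _ (hdiff c d) hclose
    exact ⟨z, hK hz, sub_eq_zero.1 hz0⟩
  intro z hz
  calc ‖f z - (c * τ z + d) - (f z - (a₀ * τ z + b₀))‖
      = ‖((a₀ - c : ℝ) : ℂ) * τ z + ((b₀ - d : ℝ) : ℂ)‖ := by push_cast; ring_nf
    _ ≤ |c - a₀| * M + |d - b₀| := by
      refine (norm_add_le _ _).trans ?_
      rw [norm_mul, Complex.norm_real, Complex.norm_real, Real.norm_eq_abs, Real.norm_eq_abs,
        abs_sub_comm, abs_sub_comm b₀]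
      gcongr
      exact hM z hz
    _ < ε / (M + 1) * M + ε / (M + 1) := add_lt_add_of_le_of_lt (by gcongr) hd
    _ = ε := by field_simp

theorem stmt_19_general (Δ : Set ℂ) (hopen : IsOpen Δ) (hconn : IsPreconnected Δ)
    (f τ : ℂ → ℂ) (hf : DifferentiableOn ℂ f Δ) (hτ : DifferentiableOn ℂ τ Δ)
    (hup : ∀ t ∈ Δ, 0 < (τ t).im)
    (a b : ℂ → ℝ)
    (hfab : ∀ t ∈ Δ, f t = (a t : ℂ) * τ t + (b t : ℂ))
    (I : Set ℕ) (hI : I.Infinite)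
    (havoid : ∀ t ∈ Δ, ∀ n ∈ I, ∀ p q : ℤ,
      ¬ (a t = (p : ℝ) / (n : ℝ) ∧ b t = (q : ℝ) / (n : ℝ))) :
    ∀ s ∈ Δ, ∀ t ∈ Δ, a s = a t ∧ b s = b t := by
  intro s hs t ht
  have hcoord {z : ℂ} (hz : z ∈ Δ) (c d : ℝ) : f z = c * τ z + d ↔ a z = c ∧ b z = d := by
    rw [hfab z hz]
    exact Complex.ofReal_mul_add_ofReal_inj (hup z hz).ne'
  set g : ℂ → ℂ := fun z ↦ f z - (a s * τ z + b s)
  have hg : AnalyticOnNhd ℂ g Δ := (hf.sub ((hτ.const_mul _).add_const _)).analyticOnNhd hopen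
  rcases (hg s hs).eventually_eq_zero_or_eventually_ne_zero with hzero | hiso
  · have hgt := hg.eqOn_zero_of_preconnected_of_eventuallyEq_zero hconn hs hzero ht
    obtain ⟨hat, hbt⟩ := (hcoord ht _ _).1 (sub_eq_zero.1 hgt)
    exact ⟨hat.symm, hbt.symm⟩
  · obtain ⟨δ, hδ, hsurj⟩ := Complex.exists_pos_forall_exists_eq_ofReal_mul_add_ofReal
      (hopen.mem_nhds hs) hf hτ (hfab s hs) (hiso.mono fun _ ↦ sub_ne_zero.1)
    obtain ⟨n, hn, p, q, hp, hq⟩ := hI.exists_int_div_near (a s) (b s) hδ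
    obtain ⟨z, hz, hfz⟩ := hsurj _ _ hp hq
    exact absurd ((hcoord hz _ _).1 hfz) (havoid z hz n hn p q)

theorem stmt_19 (Δ : Set ℂ) (hopen : IsOpen Δ) (hconn : IsPreconnected Δ)
    (f τ : ℂ → ℂ) (hf : DifferentiableOn ℂ f Δ) (hτ : DifferentiableOn ℂ τ Δ)
    (hup : ∀ t ∈ Δ, 0 < (τ t).im)
    (a b : ℂ → ℝ) (ha : ContinuousOn a Δ) (hb : ContinuousOn b Δ)
    (hfab : ∀ t ∈ Δ, f t = (a t : ℂ) * τ t + (b t : ℂ))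
    (I : Set ℕ) (hI : I.Infinite)
    (hImul : ∀ m ∈ I, ∀ n ∈ I, m * n ∈ I)
    (havoid : ∀ t ∈ Δ, ∀ n ∈ I, ∀ p q : ℤ,
      ¬ (a t = (p : ℝ) / (n : ℝ) ∧ b t = (q : ℝ) / (n : ℝ))) :
    ∀ s ∈ Δ, ∀ t ∈ Δ, a s = a t ∧ b s = b t :=
  stmt_19_general Δ hopen hconn f τ hf hτ hup a b hfab I hI havoid
end
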